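/- arXiv:2201.00188 — 4 statements merged into one kernel-verified Lean document; each statement's English description precedes it below -/
import Mathlib

section
/- Let D be a probability distribution on a finite set S. If the collision probability of D (i.e., the probability that two independent samples from D are equal) is at most (1 + 2ε²)/|S|, then the statistical distance between D and the uniform distribution on S is at most ε. -/
/-!
Put `n = |S|` and `u = 1/n`. Since `∑ D = 1`, the squared ℓ²-distance to the uniform distribution
is the excess collision probability, `∑ (D s - u)² = ∑ D s² - u ≤ 2ε²/n`, and Cauchy–Schwarz turns
this into `(∑ |D s - u|)² ≤ n · 2ε²/n = 2ε² ≤ (2ε)²`.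
-/

open Finset

section

variable {ι : Type*} [Fintype ι]

/-- Also true for empty `ι`, where `1 / 0 = 0`. -/
lemma sum_sq_sub_inv_card_of_sum_eq_one (D : ι → ℝ) (hD1 : ∑ i, D i = 1) :
    ∑ i, (D i - 1 / Fintype.card ι) ^ 2 = ∑ i, D i ^ 2 - 1 / Fintype.card ι := by
  set n : ℝ := (Fintype.card ι : ℝ)
  have hcross : n * (1 / n) ^ 2 = 1 / n := by
    rcases eq_or_ne n 0 with hn | hn
    · simp [hn]
    · field_simp
  simp only [sub_sq, sum_add_distrib, sum_sub_distrib, ← sum_mul, ← mul_sum, hD1, sum_const,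
    card_univ, nsmul_eq_mul]
  linear_combination hcross

lemma sq_sum_abs_le_card_mul_sum_sq (x : ι → ℝ) :
    (∑ i, |x i|) ^ 2 ≤ Fintype.card ι * ∑ i, x i ^ 2 := by
  simpa only [sq_abs, card_univ] using sq_sum_le_card_mul_sum_sq (s := univ) (f := fun i ↦ |x i|)

lemma sq_sum_abs_sub_uniform_le (D : ι → ℝ) (hD1 : ∑ i, D i = 1) :
    (∑ i, |D i - 1 / Fintype.card ι|) ^ 2
      ≤ Fintype.card ι * (∑ i, D i ^ 2 - 1 / Fintype.card ι) := by
  rw [← sum_sq_sub_inv_card_of_sum_eq_one D hD1]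
  exact sq_sum_abs_le_card_mul_sum_sq _

end

theorem stmt_0_general {S : Type*} [Fintype S] (D : S → ℝ)
    (hD1 : ∑ s, D s = 1)
    (ε : ℝ) (hε : 0 ≤ ε)
    (hcoll : ∑ s, (D s) ^ 2 ≤ (1 + 2 * ε ^ 2) / (Fintype.card S)) :
    (1 / 2) * ∑ s, |D s - 1 / (Fintype.card S)| ≤ ε := by
  set n : ℝ := (Fintype.card S : ℝ)
  have hexcess : ∑ s, D s ^ 2 - 1 / n ≤ 2 * ε ^ 2 / n := by
    rw [add_div] at hcoll
    linarith
  have hsq : (∑ s, |D s - 1 / n|) ^ 2 ≤ (2 * ε) ^ 2 :=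
    calc (∑ s, |D s - 1 / n|) ^ 2 ≤ n * (∑ s, D s ^ 2 - 1 / n) := sq_sum_abs_sub_uniform_le D hD1
      _ ≤ n * (2 * ε ^ 2 / n) := by gcongr
      _ ≤ 2 * ε ^ 2 := by
        rcases eq_or_ne n 0 with hn | hn
        · simpa [hn] using mul_nonneg zero_le_two (sq_nonneg ε)
        · rw [mul_div_cancel₀ _ hn]
      _ ≤ (2 * ε) ^ 2 := by nlinarith
  have hdist : ∑ s, |D s - 1 / n| ≤ 2 * ε :=
    (pow_le_pow_iff_left₀ (sum_nonneg fun s _ ↦ abs_nonneg _) (by positivity) two_ne_zero).1 hsq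
  linarith

/-- Lemma of Impagliazzo–Zuckerman: if a distribution `D` on a finite
set `S` has collision probability `∑ s, D s ^ 2` at most `(1 + 2ε²)/|S|`, then its
statistical distance to the uniform distribution is at most `ε`. -/
theorem stmt_0 {S : Type*} [Fintype S] [Nonempty S] (D : S → ℝ)
    (hD0 : ∀ s, 0 ≤ D s) (hD1 : ∑ s, D s = 1)
    (ε : ℝ) (hε : 0 ≤ ε)
    (hcoll : ∑ s, (D s) ^ 2 ≤ (1 + 2 * ε ^ 2) / (Fintype.card S)) :
    (1 / 2) * ∑ s, |D s - 1 / (Fintype.card S)| ≤ ε :=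
  stmt_0_general D hD1 ε hε hcoll
end

section
/- Let X, X' be i.i.d. random variables on {0,1}^n, independent of the other randomness. Let K, K' be i.i.d. uniform on {0,1}^ℓ, and (U,V) uniform public randomness as in the hash h_{u,v}(k) = k ∥ (u·k + v)_lsb with λ = max{ℓ, n−ℓ}. Define Enc_{u,v}(k,x) = (u, v, x ⊕ h_{u,v}(k)). Then the collision probability satisfies Pr[Enc_{U,V}(K,X) = Enc_{U',V'}(K',X')] ≤ 2^{-2n}(1 + 2^{n−ℓ−H₂(X)}), where (U',V') is an independent copy of (U,V). -/
/-!
Two ciphertexts can only collide when `(u, v) = (u', v')`, which has probability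
`2^{-λ-(n-ℓ)} ≤ 2^{-n}`. Given that, they collide iff `x' = x + h(k) - h(k')`, so what remains is
the average of the autocorrelation `z ↦ ∑ₓ p x * p (x + z)` of the message distribution at
`z = hashHom u (k - k')`. The key difference `d = k - k'` vanishes with probability `2^{-ℓ}`,
giving `z = 0` and the term `∑ₓ p x ^ 2 = 2^{-H₂(X)}`. For `d ≠ 0`, `u ↦ u * inj d` is a
bijection of the field, so the last `n - ℓ` bits of `z` are uniform over `u`; as the
autocorrelation sums to `1` over all `z`, these terms add at most `2^{-ℓ} * 2^{-(n-ℓ)} = 2^{-n}`.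
-/

open Finset

theorem AddMonoidHom.card_nsmul_sum_comp_of_surjective {A B M : Type*} [AddGroup A] [Fintype A]
    [AddMonoid B] [Fintype B] [DecidableEq B] [AddCommMonoid M] (φ : A →+ B)
    (hφ : Function.Surjective φ) (f : B → M) :
    Fintype.card B • ∑ a, f (φ a) = Fintype.card A • ∑ b, f b := by
  have hfib : ∀ b, #{a | φ a = b} = #{a | φ a = 0} := fun b =>
    AddMonoidHom.card_fiber_eq_of_mem_range φ (hφ b) (hφ 0)
  have hcard : Fintype.card A = Fintype.card B * #{a | φ a = 0} := by
    rw [← Finset.card_univ, Finset.card_eq_sum_card_fiberwise (f := φ) (t := univ)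
      fun _ _ => mem_univ _]
    simp [hfib]
  rw [Finset.sum_comp, Finset.image_univ_of_surjective hφ]
  simp only [hfib, ← Finset.smul_sum, smul_smul, hcard]

theorem Fintype.sum_sum_sub {K M : Type*} [AddGroup K] [Fintype K] [AddCommMonoid M]
    (f : K → M) : ∑ k, ∑ k', f (k - k') = Fintype.card K • ∑ d, f d := by
  rw [Finset.sum_comm, ← Finset.card_univ, ← Finset.sum_const]
  exact Finset.sum_congr rfl fun k' _ => Fintype.sum_equiv (Equiv.subRight k') _ _ fun _ => rfl

theorem Fin.append_add {α : Type*} [Add α] {l m : ℕ} (a c : Fin l → α) (b d : Fin m → α) :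
    Fin.append (a + c) (b + d) = Fin.append a b + Fin.append c d := by
  ext i
  induction i using Fin.addCases <;> simp

theorem Fin.sum_sum_append {α M : Type*} [AddCommMonoid M] {l m : ℕ} [Fintype α]
    (f : (Fin (l + m) → α) → M) : ∑ a, ∑ b, f (Fin.append a b) = ∑ z, f z := by
  rw [← Fintype.sum_prod_type']
  exact Fintype.sum_equiv (Fin.appendEquiv l m) _ _ fun _ => rfl

section Autocorrelation

variable {G R : Type*} [AddCommGroup G] [Fintype G] [CommSemiring R]

def autocorr (p : G → R) (z : G) : R := ∑ x, p x * p (x + z)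

theorem autocorr_zero (p : G → R) : autocorr p 0 = ∑ x, p x ^ 2 := by
  simp [autocorr, sq]

theorem sum_autocorr (p : G → R) : ∑ z, autocorr p z = (∑ x, p x) ^ 2 := by
  simp only [sq, Finset.sum_mul_sum, autocorr]
  rw [Finset.sum_comm]
  exact Finset.sum_congr rfl fun x _ => Fintype.sum_equiv (Equiv.addLeft x) _ _ fun _ => rfl

theorem autocorr_nonneg {p : G → ℝ} (hp : ∀ x, 0 ≤ p x) (z : G) : 0 ≤ autocorr p z :=
  Finset.sum_nonneg fun x _ => mul_nonneg (hp x) (hp _)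

theorem sum_sum_mul_ite_add_eq_add [DecidableEq G] (p : G → R) (a b : G) :
    ∑ x, ∑ x', p x * p x' * (if x + a = x' + b then 1 else 0) = autocorr p (a - b) := by
  refine Finset.sum_congr rfl fun x _ => ?_
  simp_rw [← sub_eq_iff_eq_add, mul_ite, mul_one, mul_zero, Finset.sum_ite_eq, mem_univ,
    if_true, add_sub_assoc]

theorem sum_collision_eq {U V K : Type*} [Fintype U] [DecidableEq U] [Fintype V] [DecidableEq V]
    [Fintype K] [DecidableEq G] (c : R) (p : G → R) (E : U → V → K → G) :
    ∑ u, ∑ v, ∑ u', ∑ v', ∑ k, ∑ k', ∑ x, ∑ x',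
        c * p x * p x' * (if (u, v, x + E u v k) = (u', v', x' + E u' v' k') then 1 else 0)
      = c * ∑ u, ∑ v, ∑ k, ∑ k', autocorr p (E u v k - E u v k') := by
  have inner : ∀ u v u' v', ∑ k, ∑ k', ∑ x, ∑ x',
      c * p x * p x' * (if (u, v, x + E u v k) = (u', v', x' + E u' v' k') then 1 else 0)
        = if u = u' ∧ v = v' then c * ∑ k, ∑ k', autocorr p (E u v k - E u v k') else 0 := by
    intro u v u' v'
    split_ifs with h
    · obtain ⟨rfl, rfl⟩ := h
      simp only [Prod.mk.injEq, true_and, Finset.mul_sum, mul_assoc,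
        ← sum_sum_mul_ite_add_eq_add]
    · refine Fintype.sum_eq_zero _ fun k => Fintype.sum_eq_zero _ fun k' =>
        Fintype.sum_eq_zero _ fun x => Fintype.sum_eq_zero _ fun x' => ?_
      rw [if_neg (by simp only [Prod.mk.injEq]; tauto), mul_zero]
  simp only [inner, ite_and, Finset.sum_ite_irrel, Finset.sum_const_zero, Finset.sum_ite_eq,
    mem_univ, if_true, Finset.mul_sum]

end Autocorrelation

section Hash

variable {α F : Type*} [AddCommGroup α] {l m : ℕ}

/-- The hash `h_{u,v}(k) = k ∥ (lsb (u * inj k) + v)` is `hashHom lsb inj u k + (0 ∥ v)`. -/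
def hashHom [NonUnitalNonAssocSemiring F] (lsb : F →+ (Fin m → α)) (inj : (Fin l → α) →+ F)
    (u : F) : (Fin l → α) →+ (Fin (l + m) → α) :=
  AddMonoidHom.mk' (fun k => Fin.append k (lsb (u * inj k))) fun k k' => by
    simp only [map_add, mul_add, Fin.append_add]

theorem sum_sum_append_hash_sub_append_hash {M : Type*} [AddCommMonoid M] [Fintype α]
    [NonUnitalNonAssocSemiring F] (lsb : F →+ (Fin m → α)) (inj : (Fin l → α) →+ F) (u : F)
    (v : Fin m → α) (f : (Fin (l + m) → α) → M) :
    ∑ k, ∑ k', f (Fin.append k (lsb (u * inj k) + v) - Fin.append k' (lsb (u * inj k') + v))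
      = Fintype.card (Fin l → α) • ∑ d, f (hashHom lsb inj u d) := by
  have shift : ∀ k, Fin.append k (lsb (u * inj k) + v) = hashHom lsb inj u k + Fin.append 0 v :=
    fun k => by
      change _ = Fin.append k (lsb (u * inj k)) + Fin.append 0 v
      rw [← Fin.append_add, add_zero]
  simp only [shift, add_sub_add_right_eq_sub, ← map_sub]
  exact Fintype.sum_sum_sub fun d => f (hashHom lsb inj u d)

variable [Field F] [Fintype F] [Fintype α] [DecidableEq α]

theorem card_nsmul_sum_hashHom_of_ne_zero {M : Type*} [AddCommMonoid M]
    {lsb : F →+ (Fin m → α)} (hlsb : Function.Surjective lsb) {inj : (Fin l → α) →+ F}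
    (hinj : Function.Injective inj) {d : Fin l → α} (hd : d ≠ 0) (f : (Fin (l + m) → α) → M) :
    Fintype.card (Fin m → α) • ∑ u, f (hashHom lsb inj u d)
      = Fintype.card F • ∑ a, f (Fin.append d a) := by
  have hinjd : inj d ≠ 0 := (map_ne_zero_iff inj hinj).mpr hd
  rw [Fintype.sum_equiv (Equiv.mulRight₀ (inj d) hinjd) (fun u => f (hashHom lsb inj u d))
    (fun w => f (Fin.append d (lsb w))) fun _ => rfl]
  exact lsb.card_nsmul_sum_comp_of_surjective hlsb fun a => f (Fin.append d a)

theorem card_mul_sum_sum_autocorr_hashHom_le {lsb : F →+ (Fin m → α)}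
    (hlsb : Function.Surjective lsb) {inj : (Fin l → α) →+ F} (hinj : Function.Injective inj)
    {p : (Fin (l + m) → α) → ℝ} (hp : ∀ x, 0 ≤ p x) (hpsum : ∑ x, p x = 1) :
    Fintype.card (Fin m → α) * ∑ u, ∑ d, autocorr p (hashHom lsb inj u d)
      ≤ Fintype.card F * (Fintype.card (Fin m → α) * ∑ x, p x ^ 2 + 1) := by
  have hzero : ∑ u : F, autocorr p (hashHom lsb inj u 0) = Fintype.card F * ∑ x, p x ^ 2 := by
    simp [autocorr_zero]
  have hne : ∑ d ∈ univ.erase 0, Fintype.card (Fin m → α) * ∑ u, autocorr p (hashHom lsb inj u d)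
      ≤ Fintype.card F :=
    calc _ = Fintype.card F * ∑ d ∈ univ.erase 0, ∑ a, autocorr p (Fin.append d a) := by
          rw [Finset.mul_sum]
          refine Finset.sum_congr rfl fun d hd => ?_
          simpa only [nsmul_eq_mul] using
            card_nsmul_sum_hashHom_of_ne_zero hlsb hinj (ne_of_mem_erase hd) (autocorr p)
      _ ≤ Fintype.card F * ∑ d : Fin l → α, ∑ a, autocorr p (Fin.append d a) := by
          gcongr
          · exact fun d _ _ => sum_nonneg fun a _ => autocorr_nonneg hp _
          · exact subset_univ _
      _ = Fintype.card F := by rw [Fin.sum_sum_append, sum_autocorr, hpsum, one_pow, mul_one]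
  rw [Finset.sum_comm, ← Finset.add_sum_erase univ _ (mem_univ 0), mul_add, hzero,
    Finset.mul_sum (univ.erase 0)]
  linarith

end Hash

/-- Here `m = n - ℓ`, and `∑ x, p x ^ 2 = 2^{-H₂(X)}`. -/
theorem stmt_4 {l m lam : ℕ} (hlam : lam = max l m)
    {F : Type*} [Field F] [Fintype F] [DecidableEq F]
    (hcard : Fintype.card F = 2 ^ lam)
    (lsb : F →+ (Fin m → ZMod 2)) (hlsb : Function.Surjective lsb)
    (inj : (Fin l → ZMod 2) →+ F) (hinj : Function.Injective inj)
    (p : (Fin (l + m) → ZMod 2) → ℝ) (hp : ∀ x, 0 ≤ p x) (hpsum : ∑ x, p x = 1) :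
    (∑ u : F, ∑ v : Fin m → ZMod 2, ∑ u' : F, ∑ v' : Fin m → ZMod 2,
      ∑ k : Fin l → ZMod 2, ∑ k' : Fin l → ZMod 2,
      ∑ x : Fin (l + m) → ZMod 2, ∑ x' : Fin (l + m) → ZMod 2,
        (1 / (2 ^ lam * 2 ^ m * 2 ^ l) : ℝ) ^ 2 * p x * p x' *
          (if (u, v, x + Fin.append k (lsb (u * inj k) + v))
              = (u', v', x' + Fin.append k' (lsb (u' * inj k') + v')) then 1 else 0))
    ≤ (1 / 2 ^ (2 * (l + m)) : ℝ) * (1 + 2 ^ m * ∑ x, p x ^ 2) := by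
  have hl : l ≤ lam := hlam ▸ le_max_left l m
  have hbound := card_mul_sum_sum_autocorr_hashHom_le hlsb hinj hp hpsum
  simp only [hcard, Fintype.card_fun, Fintype.card_fin, ZMod.card, Nat.cast_pow,
    Nat.cast_ofNat] at hbound
  rw [sum_collision_eq]
  simp only [sum_sum_append_hash_sub_append_hash, Finset.sum_const, Finset.card_univ,
    Fintype.card_fun, Fintype.card_fin, ZMod.card, nsmul_eq_mul, ← Finset.mul_sum]
  set T := ∑ u, ∑ d, autocorr p (hashHom lsb inj u d)
  set S := ∑ x, p x ^ 2
  have hS : 0 ≤ S := sum_nonneg fun x _ => sq_nonneg _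
  have hpow : (2 : ℝ) ^ (2 * (l + m)) ≤ 2 ^ lam * 2 ^ m * 2 ^ l * 2 ^ m := by
    simp only [← pow_add]
    exact pow_le_pow_right₀ one_le_two (by omega)
  calc _ = 2 ^ l * (2 ^ m * T) / (2 ^ lam * 2 ^ m * 2 ^ l) ^ 2 := by push_cast; ring
    _ ≤ 2 ^ l * (2 ^ lam * (2 ^ m * S + 1)) / (2 ^ lam * 2 ^ m * 2 ^ l) ^ 2 := by gcongr
    _ = (1 + 2 ^ m * S) / (2 ^ lam * 2 ^ m * 2 ^ l * 2 ^ m) := by field_simp; ring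
    _ ≤ _ := by rw [one_div_mul_eq_div]; gcongr
end

section
/- Let f : {0,1}^{2n} → R be any function into a (possibly non-commutative) ring R. Let k, k' range uniformly and independently over {0,1}^ℓ, u uniformly over {0,1}^λ with λ = max{ℓ, 2n−ℓ}, and v uniformly over {0,1}^{2n−ℓ}. With g = (u·k+v)_lsb and g' = (u·k'+v)_lsb (GF(2^λ) arithmetic, lsb = last 2n−ℓ bits), it holds that E_{k,k',u,v}[f(k∥g)·f(k'∥g')] = 2^{-ℓ} E_β[f(β)·f(β)] + E_{β,β'}[f(β)·f(β')] − 2^{-ℓ} E_{k,g,g'}[f(k∥g)·f(k∥g')], where β, β' are independent uniform on {0,1}^{2n} and g, g' independent uniform on {0,1}^{2n−ℓ}. -/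
/-!
Fix `k, k'`. Shifting `v` by `(u·k)_lsb` turns the inner sum into
`∑_g f(k∥g) f(k'∥((u·(k'-k))_lsb + g))`. For `k = k'` the shift vanishes and every `u`
contributes the diagonal sum. For `k ≠ k'` the map `u ↦ u·(k'-k)` is a bijection of
`GF(2^λ)` and `lsb` is a surjective additive map, so `(u·(k'-k))_lsb` runs over
`{0,1}^{2n-ℓ}` exactly `2^{λ-(2n-ℓ)}` times, and the sum factors as
`2^{λ-(2n-ℓ)} (∑_g f(k∥g)) (∑_g' f(k'∥g'))`. Summing over all pairs and correcting the
diagonal gives the identity.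
-/

open Finset

theorem Fin.sum_fun_add_eq_sum_sum_append {α M : Type*} [Fintype α] [AddCommMonoid M]
    {l m : ℕ} (G : (Fin (l + m) → α) → M) :
    ∑ β, G β = ∑ k : Fin l → α, ∑ g : Fin m → α, G (Fin.append k g) := by
  rw [← (Fin.appendEquiv l m).sum_comp G, Fintype.sum_prod_type]
  rfl

theorem Finset.sum_sum_eq_sum_diag_add_sum_sum_sub_diag {K M : Type*} [Fintype K]
    [DecidableEq K] [AddCommGroup M] (S B : K → K → M)
    (h : ∀ k k', k ≠ k' → S k k' = B k k') :
    ∑ k, ∑ k', S k k' = ∑ k, S k k + ∑ k, ∑ k', B k k' - ∑ k, B k k := by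
  have hrow : ∀ k, ∑ k', S k k' = S k k + (∑ k', B k k' - B k k) := fun k => by
    rw [← add_sum_erase _ _ (mem_univ k), ← sum_erase_eq_sub (mem_univ k)]
    exact congrArg _ (sum_congr rfl fun k' hk' => h k k' (ne_of_mem_erase hk').symm)
  simp only [hrow, sum_add_distrib, sum_sub_distrib, add_sub_assoc]

namespace AddMonoidHom

variable {F V : Type*} [AddGroup F] [Fintype F] [AddMonoid V] [Fintype V] [DecidableEq V]
  (φ : F →+ V) (hφ : Function.Surjective φ)
include hφ

theorem sum_comp_of_surjective {M : Type*} [AddCommMonoid M] (G : V → M) :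
    ∑ w, G (φ w) = #{w | φ w = 0} • ∑ d, G d := by
  rw [← sum_fiberwise univ φ, smul_sum]
  refine sum_congr rfl fun d _ => ?_
  rw [sum_congr rfl fun w hw => congrArg G (mem_filter.1 hw).2, sum_const,
    card_fiber_eq_of_mem_range φ (hφ d) (hφ 0)]

theorem card_eq_card_fiber_zero_mul_card :
    Fintype.card F = #{w | φ w = 0} * Fintype.card V := by
  simpa only [sum_const, card_univ, smul_eq_mul, mul_one] using
    φ.sum_comp_of_surjective hφ fun _ => (1 : ℕ)

end AddMonoidHom

section Shift

variable {F V R : Type*} [Fintype F] [AddCommGroup V] [Fintype V] [Ring R]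

theorem sum_sum_mul_shift_self (a : F → V) (P Q : V → R) :
    ∑ u, ∑ v, P (a u + v) * Q (a u + v) = Fintype.card F • ∑ v, P v * Q v := by
  refine (sum_congr rfl fun u _ =>
    Equiv.sum_comp (Equiv.addLeft (a u)) fun v => P v * Q v).trans ?_
  rw [sum_const, card_univ]

theorem sum_sum_mul_shift_of_ne [Field F] [DecidableEq V] (φ : F →+ V)
    (hφ : Function.Surjective φ) {x y : F} (hxy : x ≠ y) (P Q : V → R) :
    ∑ u, ∑ v, P (φ (u * x) + v) * Q (φ (u * y) + v)
      = #{w | φ w = 0} • ((∑ v, P v) * ∑ v, Q v) := by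
  have hyx : y - x ≠ 0 := sub_ne_zero.2 hxy.symm
  have hshift : ∀ u v, φ (u * (y - x)) + (φ (u * x) + v) = φ (u * y) + v := fun u v => by
    rw [← add_assoc, ← map_add, mul_sub, sub_add_cancel]
  have hQ : ∀ v, ∑ w, Q (φ w + v) = #{w | φ w = 0} • ∑ d, Q d := fun v => by
    rw [φ.sum_comp_of_surjective hφ (fun d => Q (d + v))]
    exact congrArg _ (Equiv.sum_comp (Equiv.addRight v) Q)
  calc ∑ u, ∑ v, P (φ (u * x) + v) * Q (φ (u * y) + v)
      = ∑ u, ∑ v, P v * Q (φ (u * (y - x)) + v) := sum_congr rfl fun u _ => by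
        rw [← Equiv.sum_comp (Equiv.addLeft (φ (u * x))) fun v => P v * Q (φ (u * (y - x)) + v)]
        simp only [Equiv.coe_addLeft, hshift]
    _ = ∑ v, P v * ∑ w, Q (φ w + v) := by
        rw [sum_comm]
        refine sum_congr rfl fun v _ => ?_
        rw [← mul_sum]
        exact congrArg _ (Equiv.sum_comp (Equiv.mulRight₀ (y - x) hyx) fun w => Q (φ w + v))
    _ = #{w | φ w = 0} • ((∑ v, P v) * ∑ v, Q v) := by
        simp only [hQ, mul_smul_comm, ← smul_sum, sum_mul]

end Shift

theorem stmt_6_general {l m lam : ℕ} (hlam : lam = max l m)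
    {F : Type*} [Field F] [Fintype F]
    (hcard : Fintype.card F = 2 ^ lam)
    (lsb : F →+ (Fin m → ZMod 2)) (hlsb : Function.Surjective lsb)
    (inj : (Fin l → ZMod 2) →+ F) (hinj : Function.Injective inj)
    {R : Type*} [Ring R] (f : (Fin (l + m) → ZMod 2) → R) :
    ∑ k : Fin l → ZMod 2, ∑ k' : Fin l → ZMod 2, ∑ u : F, ∑ v : Fin m → ZMod 2,
        f (Fin.append k (lsb (u * inj k) + v)) * f (Fin.append k' (lsb (u * inj k') + v))
    = 2 ^ lam • (∑ β : Fin (l + m) → ZMod 2, f β * f β)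
      + 2 ^ (lam - m) •
          (∑ β : Fin (l + m) → ZMod 2, ∑ β' : Fin (l + m) → ZMod 2, f β * f β')
      - 2 ^ (lam - m) •
          (∑ k : Fin l → ZMod 2, ∑ g : Fin m → ZMod 2, ∑ g' : Fin m → ZMod 2,
            f (Fin.append k g) * f (Fin.append k g')) := by
  have hker : #{w | lsb w = 0} = 2 ^ (lam - m) := by
    have h := lsb.card_eq_card_fiber_zero_mul_card hlsb
    rw [hcard, Fintype.card_fun, ZMod.card, Fintype.card_fin, ← Nat.sub_add_cancel
      (hlam ▸ le_max_right l m : m ≤ lam), pow_add] at h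
    exact (Nat.eq_of_mul_eq_mul_right (by positivity) h).symm
  rw [sum_sum_eq_sum_diag_add_sum_sum_sub_diag _
      (fun k k' =>
        #{w | lsb w = 0} • ((∑ g, f (Fin.append k g)) * ∑ g', f (Fin.append k' g')))
      fun k k' hkk => sum_sum_mul_shift_of_ne lsb hlsb (hinj.ne hkk) _ _]
  simp only [fun k => sum_sum_mul_shift_self (fun u => lsb (u * inj k))
    (fun g => f (Fin.append k g)) (fun g => f (Fin.append k g)), hcard, hker]
  rw [Fin.sum_fun_add_eq_sum_sum_append (fun β => f β * f β)]
  simp only [← smul_sum, ← sum_mul_sum, ← Fin.sum_fun_add_eq_sum_sum_append]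

/-- Lemma 7 of the paper: the averaging identity for an arbitrary
(possibly non-commutative) ring-valued function `f` on `{0,1}^{2n}`.  Here
`2n = ℓ + m` with `m = 2n - ℓ`, `λ = max{ℓ, m}`, `u` ranges over `F = GF(2^λ)`,
`g = (u·k + v)_lsb = (u·inj k)_lsb + v`, and `∥` is `Fin.append`.  The identity
`E_{k,k',u,v}[f(k∥g)·f(k'∥g')] = 2^{-ℓ}E_β[f(β)f(β)] + E_{β,β'}[f(β)f(β')]
  - 2^{-ℓ}E_{k,g,g'}[f(k∥g)f(k∥g')]`
is stated in the equivalent integer-scaled form (multiplied by `2^{2ℓ+λ+m}`),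
which makes sense over any ring. -/
theorem stmt_6 {n l m lam : ℕ} (hn : l + m = 2 * n) (hlam : lam = max l m)
    {F : Type*} [Field F] [Fintype F] [DecidableEq F]
    (hcard : Fintype.card F = 2 ^ lam)
    (lsb : F →+ (Fin m → ZMod 2)) (hlsb : Function.Surjective lsb)
    (inj : (Fin l → ZMod 2) →+ F) (hinj : Function.Injective inj)
    {R : Type*} [Ring R] (f : (Fin (l + m) → ZMod 2) → R) :
    ∑ k : Fin l → ZMod 2, ∑ k' : Fin l → ZMod 2, ∑ u : F, ∑ v : Fin m → ZMod 2,
        f (Fin.append k (lsb (u * inj k) + v)) * f (Fin.append k' (lsb (u * inj k') + v))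
    = 2 ^ lam • (∑ β : Fin (l + m) → ZMod 2, f β * f β)
      + 2 ^ (lam - m) •
          (∑ β : Fin (l + m) → ZMod 2, ∑ β' : Fin (l + m) → ZMod 2, f β * f β')
      - 2 ^ (lam - m) •
          (∑ k : Fin l → ZMod 2, ∑ g : Fin m → ZMod 2, ∑ g' : Fin m → ZMod 2,
            f (Fin.append k g) * f (Fin.append k g')) :=
  stmt_6_general hlam hcard lsb hlsb inj hinj f
end

section
/- Unbiasedness of the classical scheme conditioned on nonzero key difference: let λ = max{ℓ, n−ℓ}, and let k ≠ k' ∈ {0,1}^ℓ be fixed. Then over uniform u ∈ {0,1}^λ and v ∈ {0,1}^{n−ℓ}, the random string h_{u,v}(k) ⊕ h_{u,v}(k') is uniformly distributed on the coset {(k⊕k') ∥ r : r ∈ {0,1}^{n−ℓ}}. -/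
/-- for fixed distinct keys `k ≠ k'` and uniform `(u, v)`, the
difference `h_{u,v}(k) ⊕ h_{u,v}(k') = (k ⊕ k') ∥ ((u·(inj k + inj k'))_lsb)` is
uniform on the coset `{(k ⊕ k') ∥ r : r ∈ {0,1}^{n-ℓ}}`: each element has
probability `2^{-m}` (with `m = n - ℓ`, `λ = max{ℓ, m}`, `F = GF(2^λ)`). -/
theorem stmt_16 {l m lam : ℕ} (hlam : lam = max l m)
    {F : Type*} [Field F] [Fintype F] [DecidableEq F]
    (hcard : Fintype.card F = 2 ^ lam)
    (lsb : F →+ (Fin m → ZMod 2)) (hlsb : Function.Surjective lsb)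
    (inj : (Fin l → ZMod 2) →+ F) (hinj : Function.Injective inj)
    (k k' : Fin l → ZMod 2) (hkk : k ≠ k') (r : Fin m → ZMod 2) :
    ((Finset.univ.filter fun uv : F × (Fin m → ZMod 2) =>
        ((k, lsb (uv.1 * inj k) + uv.2) + (k', lsb (uv.1 * inj k') + uv.2) :
          (Fin l → ZMod 2) × (Fin m → ZMod 2)) = (k + k', r)).card : ℝ)
      / (2 ^ lam * 2 ^ m) = 1 / 2 ^ m := by
  classical
  set a : F := inj (k + k') with ha
  have ha0 : a ≠ 0 := by
    intro h
    apply hkk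
    have h0 : k + k' = 0 := hinj (by rw [← ha, h, map_zero])
    funext i
    have hi : k i + k' i = 0 := congrFun h0 i
    have : ∀ x y : ZMod 2, x + y = 0 → x = y := by decide
    exact this _ _ hi
  -- simplify the filter condition
  have hcond : ∀ uv : F × (Fin m → ZMod 2),
      (((k, lsb (uv.1 * inj k) + uv.2) + (k', lsb (uv.1 * inj k') + uv.2) :
          (Fin l → ZMod 2) × (Fin m → ZMod 2)) = (k + k', r)) ↔
      lsb (uv.1 * a) = r := by
    rintro ⟨u, v⟩
    have hvv : v + v = 0 := by
      funext i
      have : ∀ x : ZMod 2, x + x = 0 := by decide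
      simpa using this (v i)
    constructor
    · intro h
      have h2 := congrArg Prod.snd h
      simp only [Prod.snd_add] at h2
      have : lsb (u * inj k) + lsb (u * inj k') = r := by
        have : lsb (u * inj k) + v + (lsb (u * inj k') + v) =
            lsb (u * inj k) + lsb (u * inj k') + (v + v) := by ring
        rw [this, hvv, add_zero] at h2
        exact h2
      rw [ha, map_add, mul_add, map_add]
      exact this
    · intro h
      have h2 : lsb (u * inj k) + v + (lsb (u * inj k') + v) = r := by
        have e : lsb (u * inj k) + v + (lsb (u * inj k') + v) =
            lsb (u * inj k) + lsb (u * inj k') + (v + v) := by ring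
        rw [e, hvv, add_zero, ← map_add, ← mul_add, ← map_add]
        exact h
      exact Prod.ext rfl h2
  have hfilter : (Finset.univ.filter fun uv : F × (Fin m → ZMod 2) =>
      ((k, lsb (uv.1 * inj k) + uv.2) + (k', lsb (uv.1 * inj k') + uv.2) :
        (Fin l → ZMod 2) × (Fin m → ZMod 2)) = (k + k', r)) =
      (Finset.univ.filter fun uv : F × (Fin m → ZMod 2) => lsb (uv.1 * a) = r) := by
    apply Finset.filter_congr
    intro x _
    exact hcond x
  rw [hfilter]
  -- count: filter only depends on the first coordinate
  have hsplit : (Finset.univ.filter fun uv : F × (Fin m → ZMod 2) =>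
      lsb (uv.1 * a) = r) =
      (Finset.univ.filter fun u : F => lsb (u * a) = r) ×ˢ Finset.univ := by
    ext ⟨u, v⟩
    simp
  -- card of the u-set equals card of a fiber of lsb
  have hbij : (Finset.univ.filter fun u : F => lsb (u * a) = r).card =
      (Finset.univ.filter fun w : F => lsb w = r).card := by
    apply Finset.card_nbij (fun u => u * a)
    · intro u hu; simpa using (Finset.mem_filter.mp hu).2
    · intro u hu u' hu' h
      exact mul_right_cancel₀ ha0 h
    · intro w hw
      refine ⟨w * a⁻¹, ?_, ?_⟩
      · simp only [Finset.mem_coe, Finset.mem_filter, Finset.mem_univ, true_and]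
        rw [mul_assoc, inv_mul_cancel₀ ha0, mul_one]
        simpa using (Finset.mem_filter.mp hw).2
      · show w * a⁻¹ * a = w
        rw [mul_assoc, inv_mul_cancel₀ ha0, mul_one]
  -- all fibers of lsb have the same cardinality
  have hconst : ∀ r' : Fin m → ZMod 2,
      (Finset.univ.filter fun w : F => lsb w = r').card =
      (Finset.univ.filter fun w : F => lsb w = r).card := by
    intro r'
    obtain ⟨w0, hw0⟩ := hlsb (r - r')
    apply Finset.card_nbij (fun w => w + w0)
    · intro w hw
      simp only [Finset.mem_coe, Finset.mem_filter, Finset.mem_univ, true_and] at hw ⊢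
      rw [map_add, hw, hw0]
      abel
    · intro w _ w' _ h; exact add_right_cancel h
    · intro w hw
      refine ⟨w - w0, by
        simp only [Finset.mem_coe, Finset.mem_filter, Finset.mem_univ, true_and] at hw ⊢
        rw [map_sub, hw, hw0]; abel, ?_⟩
      show w - w0 + w0 = w
      abel
  set c : ℕ := (Finset.univ.filter fun w : F => lsb w = r).card with hc
  have hfib : 2 ^ lam = 2 ^ m * c := by
    have h1 : (Finset.univ : Finset F).card =
        ∑ r' : Fin m → ZMod 2, (Finset.univ.filter fun w : F => lsb w = r').card :=
      Finset.card_eq_sum_card_fiberwise (fun x _ => Finset.mem_univ _)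
    have h2 : ∑ r' : Fin m → ZMod 2, (Finset.univ.filter fun w : F => lsb w = r').card
        = Fintype.card (Fin m → ZMod 2) * c := by
      rw [Finset.sum_congr rfl (fun r' _ => hconst r'), Finset.sum_const,
        smul_eq_mul, Fintype.card]
    have h3 : Fintype.card (Fin m → ZMod 2) = 2 ^ m := by
      simp [ZMod.card]
    rw [← hcard, Fintype.card, h1, h2, h3]
  have hcpos : 0 < c := by
    obtain ⟨w, hw⟩ := hlsb r
    exact Finset.card_pos.mpr ⟨w, Finset.mem_filter.mpr ⟨Finset.mem_univ _, hw⟩⟩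
  rw [hsplit, Finset.card_product, hbij]
  have hunivcard : (Finset.univ : Finset (Fin m → ZMod 2)).card = 2 ^ m := by
    rw [Finset.card_univ]
    simp [ZMod.card]
  rw [hunivcard]
  have hcne : (c : ℝ) ≠ 0 := Nat.cast_ne_zero.mpr hcpos.ne'
  have h2m : (2 : ℝ) ^ m ≠ 0 := by positivity
  have hlamR : (2 : ℝ) ^ lam = 2 ^ m * c := by
    have := congrArg (fun n : ℕ => (n : ℝ)) hfib
    push_cast at this
    exact this
  rw [hlamR]
  push_cast
  field_simp
end
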